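/- Let P be a simple d-polytope and let F be a nonempty face of P with vertex set W. Then there exists an AOF-orientation O of G(P) such that W is initial with respect to O, i.e., no edge of G(P) with exactly one endpoint in W is directed from outside W into W. -/

import Mathlib

open Set

noncomputable section

/-- `P` is a polytope: the convex hull of a finite set of points. -/
def IsPolytope {d : ℕ} (P : Set (EuclideanSpace ℝ (Fin d))) : Prop :=
  ∃ s : Finset (EuclideanSpace ℝ (Fin d)),
    P = convexHull ℝ (s : Set (EuclideanSpace ℝ (Fin d)))

/-- The dimension of the affine span of a set. -/
def setDim {d : ℕ} (F : Set (EuclideanSpace ℝ (Fin d))) : ℕ :=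
  Module.finrank ℝ (vectorSpan ℝ F)

/-- A face of `P` is an exposed subset of `P` (this includes `∅` and `P` itself). -/
def IsFace {d : ℕ} (P F : Set (EuclideanSpace ℝ (Fin d))) : Prop :=
  IsExposed ℝ P F

/-- A `k`-face is a face whose affine span has dimension `k`. -/
def IsKFace {d : ℕ} (P : Set (EuclideanSpace ℝ (Fin d))) (k : ℕ)
    (F : Set (EuclideanSpace ℝ (Fin d))) : Prop :=
  IsFace P F ∧ setDim F = k

/-- The type of vertices of `P` (points whose singleton is a face, i.e. the `0`-faces). -/
abbrev Vtx {d : ℕ} (P : Set (EuclideanSpace ℝ (Fin d))) : Type :=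
  {v : EuclideanSpace ℝ (Fin d) // IsFace P {v}}

/-- The graph of the polytope `P`: two vertices are adjacent iff the segment
between them is an edge (`1`-face) of `P`. -/
def polyGraph {d : ℕ} (P : Set (EuclideanSpace ℝ (Fin d))) : SimpleGraph (Vtx P) where
  Adj u v := u ≠ v ∧
    IsFace P (segment ℝ (u : EuclideanSpace ℝ (Fin d)) (v : EuclideanSpace ℝ (Fin d)))
  symm := ⟨by
    rintro u v ⟨h1, h2⟩
    exact ⟨h1.symm, by rwa [segment_symm]⟩⟩
  loopless := ⟨by rintro v ⟨h1, _⟩; exact h1 rfl⟩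

/-- `P` is a simple `d`-polytope (in `ℝ^d`): a polytope whose affine span has
dimension `d` and each of whose vertices is incident to exactly `d` edges. -/
def IsSimplePolytope {d : ℕ} (P : Set (EuclideanSpace ℝ (Fin d))) : Prop :=
  IsPolytope P ∧ setDim P = d ∧ ∀ v : Vtx P, ((polyGraph P).neighborSet v).ncard = d

/-- `O` is an orientation of the simple graph `G`: each edge gets exactly one direction,
and only edges are directed. -/
def IsOrientation {V : Type*} (G : SimpleGraph V) (O : V → V → Prop) : Prop :=
  (∀ u v, O u v → G.Adj u v) ∧ (∀ u v, G.Adj u v → (O u v ↔ ¬ O v u))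

/-- `O` is acyclic: there is no directed cycle. -/
def AcyclicOrientation {V : Type*} (O : V → V → Prop) : Prop :=
  ∀ v, ¬ Relation.TransGen O v v

/-- `v` is a sink of the subgraph induced on `W`, under the orientation `O`. -/
def IsSinkOn {V : Type*} (O : V → V → Prop) (W : Set V) (v : V) : Prop :=
  v ∈ W ∧ ∀ u ∈ W, ¬ O v u

/-- The in-degree of `v` under `O`. -/
def inDeg {V : Type*} (O : V → V → Prop) (v : V) : ℕ := {u | O u v}.ncard

/-- `hNum O i` is the number of vertices of in-degree exactly `i` under `O`. -/
def hNum {V : Type*} (O : V → V → Prop) (i : ℕ) : ℕ := {v | inDeg O v = i}.ncard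

/-- `Hk O k = Σ_v C(indeg_O(v), k)`. -/
def Hk {V : Type*} [Fintype V] (O : V → V → Prop) (k : ℕ) : ℕ :=
  ∑ v : V, (inDeg O v).choose k

/-- The subgraph of `G` induced on `S` is `k`-regular. -/
def InducedKRegular {V : Type*} (G : SimpleGraph V) (k : ℕ) (S : Set V) : Prop :=
  ∀ v ∈ S, (S ∩ G.neighborSet v).ncard = k

/-- `𝒮` is a `k`-system of `G`: every member induces a `k`-regular subgraph, and the
node set of every `k`-frame (a root together with `k` of its neighbors) is contained
in a unique member of `𝒮`. -/
def IsKSystem {V : Type*} (G : SimpleGraph V) (k : ℕ) (𝒮 : Set (Set V)) : Prop :=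
  (∀ S ∈ 𝒮, InducedKRegular G k S) ∧
  (∀ (r : V) (N : Finset V), N.card = k → (∀ w ∈ N, G.Adj r w) →
    ∃! S, S ∈ 𝒮 ∧ insert r (N : Set V) ⊆ S)

/-- The set of vertices of `P` lying in `F`. -/
def faceVerts {d : ℕ} (P F : Set (EuclideanSpace ℝ (Fin d))) : Set (Vtx P) :=
  {v : Vtx P | (v : EuclideanSpace ℝ (Fin d)) ∈ F}

/-- The set of vertex sets of `k`-faces of `P`. -/
def kFaceSets {d : ℕ} (P : Set (EuclideanSpace ℝ (Fin d))) (k : ℕ) : Set (Set (Vtx P)) :=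
  {W | ∃ F, IsKFace P k F ∧ W = faceVerts P F}

/-- `f_k(P)`, the number of `k`-faces of `P`. -/
def numKFaces {d : ℕ} (P : Set (EuclideanSpace ℝ (Fin d))) (k : ℕ) : ℕ :=
  {F : Set (EuclideanSpace ℝ (Fin d)) | IsKFace P k F}.ncard

/-- `O` is an AOF-orientation of the graph of `P`: an acyclic orientation inducing a
unique sink on the subgraph induced by the vertex set of every nonempty face of `P`. -/
def IsAOF {d : ℕ} (P : Set (EuclideanSpace ℝ (Fin d))) (O : Vtx P → Vtx P → Prop) : Prop :=
  IsOrientation (polyGraph P) O ∧ AcyclicOrientation O ∧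
  ∀ F : Set (EuclideanSpace ℝ (Fin d)), IsFace P F → F.Nonempty →
    ∃! v : Vtx P, IsSinkOn O (faceVerts P F) v

/-! Write `P = conv s` and let `l` expose `F`. Perturbing `l` gives a functional `φ` that is
injective on `s` and still strictly smaller on the points of `s` outside `F` than on those in
`F`; orient each edge of `P` in the direction in which `φ` decreases. This is acyclic, and `F` is
initial because `φ` is larger on the vertices of `F` than on all others. Each nonempty
face has a unique sink, its `φ`-minimal vertex, because a vertex `v` of a face that is not
`φ`-minimal has an edge of the face along which `φ` decreases. That edge is found in the vertex
figure at `v`, the central projection from `v` of the other points onto a hyperplane: a vertex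
`e` of the figure minimizing `φ` lifts to an edge of the face through `v` in direction `e`. -/

open Filter Topology Function

section Argmax

variable {α : Type*}

def argmaxSet (s : Finset α) (f : α → ℝ) : Finset α :=
  s.filter fun p => ∀ q ∈ s, f q ≤ f p

variable {s t : Finset α} {f g : α → ℝ} {p q v : α}

theorem mem_argmaxSet : p ∈ argmaxSet s f ↔ p ∈ s ∧ ∀ q ∈ s, f q ≤ f p :=
  Finset.mem_filter

theorem argmaxSet_subset : argmaxSet s f ⊆ s :=
  Finset.filter_subset _ _

theorem argmaxSet_nonempty (hs : s.Nonempty) : (argmaxSet s f).Nonempty :=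
  let ⟨m, hm, hmax⟩ := s.exists_max_image f hs
  ⟨m, mem_argmaxSet.2 ⟨hm, hmax⟩⟩

theorem lt_of_notMem_argmaxSet (hp : p ∈ s) (hpf : p ∉ argmaxSet s f)
    (hq : q ∈ argmaxSet s f) : f p < f q := by
  by_contra! h
  exact hpf (mem_argmaxSet.2 ⟨hp, fun r hr => ((mem_argmaxSet.1 hq).2 r hr).trans h⟩)

theorem eq_of_mem_argmaxSet (hp : p ∈ argmaxSet s f) (hq : q ∈ argmaxSet s f) : f p = f q :=
  le_antisymm ((mem_argmaxSet.1 hq).2 p (mem_argmaxSet.1 hp).1)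
    ((mem_argmaxSet.1 hp).2 q (mem_argmaxSet.1 hq).1)

theorem lt_of_argmaxSet_eq_singleton (h : argmaxSet s f = {v}) (hq : q ∈ s) (hqv : q ≠ v) :
    f q < f v :=
  lt_of_notMem_argmaxSet hq (h ▸ fun hq' => hqv (Finset.mem_singleton.1 hq'))
    (h ▸ Finset.mem_singleton_self v)

theorem exists_argmaxSet_eq_singleton (hs : s.Nonempty) (hf : InjOn f s) :
    ∃ e, argmaxSet s f = {e} := by
  obtain ⟨e, he⟩ := argmaxSet_nonempty (f := f) hs
  refine ⟨e, Finset.eq_singleton_iff_unique_mem.2 ⟨he, fun p hp => ?_⟩⟩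
  exact hf (argmaxSet_subset hp) (argmaxSet_subset he) (eq_of_mem_argmaxSet hp he)

theorem argmaxSet_eq_singleton_of_subset (h : argmaxSet s f = {v}) (hts : t ⊆ s) (hv : v ∈ t) :
    argmaxSet t f = {v} := by
  have hvs : v ∈ argmaxSet s f := h ▸ Finset.mem_singleton_self v
  refine Finset.eq_singleton_iff_unique_mem.2
    ⟨mem_argmaxSet.2 ⟨hv, fun q hq => (mem_argmaxSet.1 hvs).2 q (hts hq)⟩, fun p hp => ?_⟩
  rw [← Finset.mem_singleton, ← h]
  refine mem_argmaxSet.2 ⟨hts (argmaxSet_subset hp), fun q hq => ?_⟩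
  exact ((mem_argmaxSet.1 hvs).2 q hq).trans ((mem_argmaxSet.1 hp).2 v hv)

theorem eventually_add_smul_lt (h : f p < f q ∨ f p = f q ∧ g p < g q) :
    ∀ᶠ ε in 𝓝[>] (0 : ℝ), (f + ε • g) p < (f + ε • g) q := by
  simp only [Pi.add_apply, Pi.smul_apply, smul_eq_mul]
  rcases h with h | ⟨h₁, h₂⟩
  · exact nhdsWithin_le_nhds <|
      ContinuousAt.eventually_lt (by fun_prop) (by fun_prop) (by simpa using h)
  · filter_upwards [self_mem_nhdsWithin] with ε (hε : 0 < ε)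
    rw [h₁]
    gcongr

theorem eventually_forall_add_smul_lt (s : Finset α) (f g : α → ℝ) :
    ∀ᶠ ε in 𝓝[>] (0 : ℝ), ∀ p ∈ s, ∀ q ∈ s, (f p < f q ∨ f p = f q ∧ g p < g q) →
      (f + ε • g) p < (f + ε • g) q := by
  simp only [Finset.eventually_all, eventually_imp_distrib_left]
  exact fun _ _ _ _ => eventually_add_smul_lt

theorem eventually_argmaxSet_add_smul (s : Finset α) (f g : α → ℝ) :
    ∀ᶠ ε in 𝓝[>] (0 : ℝ), argmaxSet s (f + ε • g) = argmaxSet (argmaxSet s f) g := by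
  filter_upwards [eventually_forall_add_smul_lt s f g, self_mem_nhdsWithin]
    with ε hlt (hε : 0 < ε)
  ext p
  constructor
  · intro hp
    obtain ⟨hp, hmax⟩ := mem_argmaxSet.1 hp
    have hpf : p ∈ argmaxSet s f := by
      by_contra hpf
      obtain ⟨a, ha⟩ := argmaxSet_nonempty (f := f) ⟨p, hp⟩
      exact (hmax a (argmaxSet_subset ha)).not_gt
        (hlt p hp a (argmaxSet_subset ha) (.inl (lt_of_notMem_argmaxSet hp hpf ha)))
    refine mem_argmaxSet.2 ⟨hpf, fun q hq => not_lt.1 fun hpq => ?_⟩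
    exact (hmax q (argmaxSet_subset hq)).not_gt
      (hlt p hp q (argmaxSet_subset hq) (.inr ⟨eq_of_mem_argmaxSet hpf hq, hpq⟩))
  · intro hp
    obtain ⟨hpf, hmax⟩ := mem_argmaxSet.1 hp
    refine mem_argmaxSet.2 ⟨argmaxSet_subset hpf, fun q hq => ?_⟩
    by_cases hqf : q ∈ argmaxSet s f
    · simp only [Pi.add_apply, Pi.smul_apply, smul_eq_mul, eq_of_mem_argmaxSet hqf hpf]
      gcongr
      exact hmax q hqf
    · exact (hlt q hq p (argmaxSet_subset hpf) (.inl (lt_of_notMem_argmaxSet hq hqf hpf))).le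

theorem eventually_injOn_add_smul (f : α → ℝ) (hg : InjOn g s) :
    ∀ᶠ ε in 𝓝[>] (0 : ℝ), InjOn (f + ε • g) s := by
  filter_upwards [eventually_forall_add_smul_lt s f g] with ε hlt p hp q hq hpq
  by_contra hne
  rcases lt_trichotomy (f p) (f q) with h | h | h
  · exact (hlt p hp q hq (.inl h)).ne hpq
  · rcases (hg.ne hp hq hne).lt_or_gt with h' | h'
    · exact (hlt p hp q hq (.inr ⟨h, h'⟩)).ne hpq
    · exact (hlt q hq p hp (.inr ⟨h.symm, h'⟩)).ne' hpq
  · exact (hlt q hq p hp (.inl h)).ne' hpq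

end Argmax

section Dual

variable {E : Type*} [AddCommGroup E] [Module ℝ E] [TopologicalSpace E]

theorem exists_argmaxSet_eq_argmaxSet_argmaxSet (s : Finset E) (f g : E →L[ℝ] ℝ) :
    ∃ h : E →L[ℝ] ℝ, argmaxSet s h = argmaxSet (argmaxSet s f) g := by
  obtain ⟨ε, hε⟩ := (eventually_argmaxSet_add_smul s f g).exists
  exact ⟨f + ε • g, hε⟩

theorem exists_forall_apply_ne_zero [SeparatingDual ℝ E] {D : Set E} (hD : D.Finite)
    (h0 : (0 : E) ∉ D) : ∃ f : E →L[ℝ] ℝ, ∀ x ∈ D, f x ≠ 0 := by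
  by_contra! h
  have := hD.to_subtype
  let ker (x : D) : Subspace ℝ (E →L[ℝ] ℝ) :=
    LinearMap.ker ((LinearMap.applyₗ (x : E)).comp (ContinuousLinearMap.coeLM ℝ))
  obtain ⟨⟨x, hx⟩, hx_top⟩ := Subspace.exists_eq_top_of_iUnion_eq_univ (p := ker) <| by
    ext f
    simpa [ker] using h f
  obtain ⟨f, hf⟩ := SeparatingDual.exists_ne_zero (R := ℝ) (ne_of_mem_of_not_mem hx h0)
  have : f ∈ ker ⟨x, hx⟩ := hx_top ▸ Submodule.mem_top
  exact hf (by simpa [ker] using this)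

theorem exists_injOn_dual [SeparatingDual ℝ E] {s : Set E} (hs : s.Finite) :
    ∃ g : E →L[ℝ] ℝ, InjOn g s := by
  obtain ⟨g, hg⟩ := exists_forall_apply_ne_zero (D := image2 (· - ·) s s \ {0})
    ((hs.image2 _ hs).sdiff) (fun h => h.2 rfl)
  refine ⟨g, fun p hp q hq hpq => by_contra fun hne => hg (p - q) ?_ ?_⟩
  · exact ⟨mem_image2_of_mem hp hq, sub_ne_zero.2 hne⟩
  · rw [map_sub, hpq, sub_self]

theorem exists_injOn_forall_lt [SeparatingDual ℝ E] (s : Finset E) (f : E →L[ℝ] ℝ) :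
    ∃ φ : E →L[ℝ] ℝ, InjOn φ s ∧ ∀ p ∈ s, ∀ q ∈ s, f p < f q → φ p < φ q := by
  obtain ⟨g, hg⟩ := exists_injOn_dual s.finite_toSet
  obtain ⟨ε, hinj, hlt⟩ :=
    ((eventually_injOn_add_smul f hg).and (eventually_forall_add_smul_lt s f g)).exists
  exact ⟨f + ε • g, hinj, fun p hp q hq hpq => hlt p hp q hq (.inl hpq)⟩

theorem exists_argmaxSet_eq_singleton_subset [SeparatingDual ℝ E] {s : Finset E}
    (hs : s.Nonempty) (f : E →L[ℝ] ℝ) :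
    ∃ h : E →L[ℝ] ℝ, ∃ e ∈ argmaxSet s f, argmaxSet s h = {e} := by
  obtain ⟨g, hg⟩ := exists_injOn_dual (argmaxSet s f).finite_toSet
  obtain ⟨e, he⟩ := exists_argmaxSet_eq_singleton (argmaxSet_nonempty hs) hg
  obtain ⟨h, hh⟩ := exists_argmaxSet_eq_argmaxSet_argmaxSet s f g
  exact ⟨h, e, argmaxSet_subset (he ▸ Finset.mem_singleton_self e), hh.trans he⟩

end Dual

section ConvexHull

variable {E : Type*} [AddCommGroup E] [Module ℝ E] [TopologicalSpace E] {s : Finset E}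

theorem toExposed_convexHull (s : Finset E) (l : E →L[ℝ] ℝ) :
    l.toExposed (convexHull ℝ ↑s) = convexHull ℝ ↑(argmaxSet s l) := by
  rcases s.eq_empty_or_nonempty with rfl | hs
  · simp [ContinuousLinearMap.toExposed, argmaxSet]
  obtain ⟨m, hm⟩ := argmaxSet_nonempty (f := l) hs
  have hle : convexHull ℝ (s : Set E) ⊆ {x | l x ≤ l m} :=
    convexHull_min (fun q hq => (mem_argmaxSet.1 hm).2 q hq)
      (convex_halfSpace_le l.toLinearMap.isLinear _)
  have hge : convexHull ℝ (argmaxSet s l : Set E) ⊆ {x | l m ≤ l x} :=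
    convexHull_min (fun q hq => (eq_of_mem_argmaxSet hm hq).le)
      (convex_halfSpace_ge l.toLinearMap.isLinear _)
  have hsub : convexHull ℝ (argmaxSet s l : Set E) ⊆ convexHull ℝ s :=
    convexHull_mono (Finset.coe_subset.2 argmaxSet_subset)
  refine Subset.antisymm ?_ fun x hx => ⟨hsub hx, fun y hy => (hle hy).trans (hge hx)⟩
  rintro x ⟨hx, hxmax⟩
  obtain ⟨w, hw₀, hw₁, rfl⟩ := Finset.mem_convexHull'.1 hx
  have hlx : ∑ y ∈ s, w y * l y = ∑ y ∈ s, w y * l m := by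
    rw [← Finset.sum_mul, hw₁, one_mul,
      ← (hle hx).antisymm (hxmax m (hsub (subset_convexHull ℝ _ hm)))]
    simp [map_sum]
  have hw : ∀ y ∈ s, y ∉ argmaxSet s l → w y = 0 := by
    intro y hy hyA
    have := (Finset.sum_eq_sum_iff_of_le fun q hq =>
      mul_le_mul_of_nonneg_left (hle (subset_convexHull ℝ _ hq)) (hw₀ q hq)).1 hlx y hy
    exact (mul_eq_mul_left_iff.1 this).resolve_left (lt_of_notMem_argmaxSet hy hyA hm).ne
  refine Finset.mem_convexHull'.2 ⟨w, fun y hy => hw₀ y (argmaxSet_subset hy), ?_, ?_⟩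
  · rw [← hw₁]
    exact Finset.sum_subset argmaxSet_subset hw
  · exact Finset.sum_subset argmaxSet_subset fun y hy hyA => by simp [hw y hy hyA]

theorem isExposed_convexHull_argmaxSet (s : Finset E) (l : E →L[ℝ] ℝ) :
    IsExposed ℝ (convexHull ℝ (s : Set E)) (convexHull ℝ (argmaxSet s l : Set E)) :=
  toExposed_convexHull s l ▸ ContinuousLinearMap.toExposed.isExposed

theorem argmaxSet_subset_toExposed (l : E →L[ℝ] ℝ) :
    (argmaxSet s l : Set E) ⊆ l.toExposed (convexHull ℝ ↑s) :=
  toExposed_convexHull s l ▸ subset_convexHull ℝ _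

theorem mem_argmaxSet_of_mem_toExposed {l : E →L[ℝ] ℝ} {v : E} (hvs : v ∈ s)
    (hv : v ∈ l.toExposed (convexHull ℝ ↑s)) : v ∈ argmaxSet s l :=
  mem_argmaxSet.2 ⟨hvs, fun q hq => hv.2 q (subset_convexHull ℝ _ hq)⟩

theorem isExposed_singleton_iff {v : E} :
    IsExposed ℝ (convexHull ℝ ↑s) {v} ↔ ∃ l : E →L[ℝ] ℝ, argmaxSet s l = {v} := by
  refine ⟨fun hv => ?_, fun ⟨l, hl⟩ => ?_⟩
  · obtain ⟨l, hl⟩ := hv (singleton_nonempty v)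
    have hs : s.Nonempty := by
      simpa using (convexHull_nonempty_iff (𝕜 := ℝ)).1 ⟨v, (hl.le (mem_singleton v)).1⟩
    have hsub := argmaxSet_subset_toExposed (s := s) l
    rw [show l.toExposed _ = {v} from hl.symm, Finset.coe_subset_singleton] at hsub
    exact ⟨l, (Finset.subset_singleton_iff.1 hsub).resolve_left (argmaxSet_nonempty hs).ne_empty⟩
  · simpa [hl] using isExposed_convexHull_argmaxSet s l

theorem mem_of_isExposed_singleton {v : E} (hv : IsExposed ℝ (convexHull ℝ ↑s) {v}) : v ∈ s :=
  let ⟨_, hl⟩ := isExposed_singleton_iff.1 hv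
  argmaxSet_subset (hl ▸ Finset.mem_singleton_self v)

end ConvexHull

section VertexFigure

variable {E : Type*} [AddCommGroup E] [Module ℝ E] [TopologicalSpace E]

/-- The central projection from `v` to the hyperplane `ℓ = -1`. When `ℓ` exposes `v` in `s`, the
images of the other points of `s` span the vertex figure of `conv s` at `v`. -/
def radialProj (ℓ : E →L[ℝ] ℝ) (v p : E) : E := (ℓ v - ℓ p)⁻¹ • (p - v)

variable {ℓ : E →L[ℝ] ℝ} {v p u e : E}

theorem sub_eq_smul_radialProj (h : ℓ p ≠ ℓ v) : p - v = (ℓ v - ℓ p) • radialProj ℓ v p := by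
  rw [radialProj, smul_smul, mul_inv_cancel₀ (sub_ne_zero.2 h.symm), one_smul]

theorem map_sub_eq_mul_radialProj (f : E →L[ℝ] ℝ) (h : ℓ p ≠ ℓ v) :
    f p - f v = (ℓ v - ℓ p) * f (radialProj ℓ v p) := by
  rw [← map_sub, sub_eq_smul_radialProj h, map_smul, smul_eq_mul]

theorem eq_of_radialProj_eq (hp : ℓ p ≠ ℓ v) (hpu : ℓ p = ℓ u)
    (h : radialProj ℓ v p = radialProj ℓ v u) : p = u := by
  have := sub_eq_smul_radialProj hp
  rwa [hpu, h, ← sub_eq_smul_radialProj (hpu ▸ hp), sub_left_inj] at this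

theorem mem_segment_of_radialProj_eq (hp : ℓ p < ℓ v) (hu : ℓ u ≤ ℓ p)
    (h : radialProj ℓ v p = radialProj ℓ v u) : p ∈ segment ℝ v u := by
  have hvu : 0 < ℓ v - ℓ u := by linarith
  rw [segment_eq_image']
  refine ⟨(ℓ v - ℓ p) / (ℓ v - ℓ u), ⟨by bound, (div_le_one hvu).2 (by linarith)⟩, ?_⟩
  dsimp only
  rw [sub_eq_smul_radialProj (by linarith : ℓ u ≠ ℓ v), smul_smul,
    div_mul_cancel₀ _ hvu.ne', ← h, ← sub_eq_smul_radialProj hp.ne, add_sub_cancel]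

theorem argmaxSet_add_smul_radialProj [DecidableEq E] {s : Finset E} (hv : argmaxSet s ℓ = {v})
    {h : E →L[ℝ] ℝ} (he : argmaxSet ((s.erase v).image (radialProj ℓ v)) h = {e}) :
    argmaxSet s (h + h e • ℓ) = insert v ((s.erase v).filter (radialProj ℓ v · = e)) := by
  set g := h + h e • ℓ
  have hvs : v ∈ s := argmaxSet_subset (hv ▸ Finset.mem_singleton_self v)
  have hlt : ∀ q ∈ s.erase v, ℓ q < ℓ v := fun q hq =>
    lt_of_argmaxSet_eq_singleton hv (Finset.mem_of_mem_erase hq) (Finset.ne_of_mem_erase hq)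
  have hg : ∀ q ∈ s.erase v, g q - g v = (ℓ v - ℓ q) * (h (radialProj ℓ v q) - h e) := by
    intro q hq
    simp only [g, add_apply, smul_apply, smul_eq_mul]
    linear_combination map_sub_eq_mul_radialProj h (hlt q hq).ne
  have hne : ∀ q ∈ s.erase v, radialProj ℓ v q ≠ e → g q < g v := by
    intro q hq hqe
    have := lt_of_argmaxSet_eq_singleton he (Finset.mem_image_of_mem _ hq) hqe
    nlinarith [hg q hq, hlt q hq]
  have heq : ∀ q ∈ s.erase v, radialProj ℓ v q = e → g q = g v := fun q hq hqe => by
    linarith [hqe ▸ hg q hq]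
  have hle : ∀ q ∈ s, g q ≤ g v := by
    intro q hq
    rcases eq_or_ne q v with rfl | hqv
    · rfl
    have hq' := Finset.mem_erase.2 ⟨hqv, hq⟩
    by_cases hqe : radialProj ℓ v q = e
    exacts [(heq q hq' hqe).le, (hne q hq' hqe).le]
  ext q
  rw [mem_argmaxSet, Finset.mem_insert, Finset.mem_filter]
  constructor
  · rintro ⟨hq, hqmax⟩
    rcases eq_or_ne q v with rfl | hqv
    · exact .inl rfl
    have hq' := Finset.mem_erase.2 ⟨hqv, hq⟩
    exact .inr ⟨hq', by_contra fun hqe => (hne q hq' hqe).not_ge (hqmax v hvs)⟩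
  · rintro (rfl | ⟨hq', hqe⟩)
    · exact ⟨hvs, hle⟩
    · exact ⟨Finset.mem_of_mem_erase hq', fun r hr => (hle r hr).trans (heq q hq' hqe).ge⟩

theorem convexHull_insert_eq_segment [DecidableEq E] {T : Finset E}
    (hT : ∀ p ∈ T, ℓ p < ℓ v ∧ radialProj ℓ v p = radialProj ℓ v u) (hu : u ∈ T)
    (humin : ∀ p ∈ T, ℓ u ≤ ℓ p) :
    convexHull ℝ (insert v T : Set E) = segment ℝ v u := by
  refine Subset.antisymm (convexHull_min ?_ (convex_segment v u)) ?_
  · refine insert_subset (left_mem_segment ℝ v u) fun p hp => ?_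
    exact mem_segment_of_radialProj_eq (hT p hp).1 (humin p hp) (hT p hp).2
  · rw [← convexHull_pair]
    exact convexHull_mono (insert_subset_insert (singleton_subset_iff.2 hu))

theorem argmaxSet_insert_neg_eq_singleton [DecidableEq E] {T : Finset E}
    (hT : ∀ p ∈ T, ℓ p < ℓ v ∧ radialProj ℓ v p = radialProj ℓ v u) (hu : u ∈ T)
    (humin : ∀ p ∈ T, ℓ u ≤ ℓ p) :
    argmaxSet (insert v T) (-ℓ) = {u} := by
  rw [Finset.eq_singleton_iff_unique_mem, mem_argmaxSet]
  refine ⟨⟨Finset.mem_insert_of_mem hu, ?_⟩, fun p hp => ?_⟩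
  · simp only [Finset.mem_insert, forall_eq_or_imp, Pi.neg_apply, neg_le_neg_iff]
    exact ⟨(hT u hu).1.le, humin⟩
  · obtain ⟨hp, hpmax⟩ := mem_argmaxSet.1 hp
    have hpu : ℓ p ≤ ℓ u := by simpa using hpmax u (Finset.mem_insert_of_mem hu)
    rcases Finset.mem_insert.1 hp with rfl | hpT
    · exact absurd hpu (hT u hu).1.not_ge
    exact eq_of_radialProj_eq (hT p hpT).1.ne (hpu.antisymm (humin p hpT)) (hT p hpT).2

end VertexFigure

section Edge

variable {E : Type*} [AddCommGroup E] [Module ℝ E] [TopologicalSpace E]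

/-- Geometrically: a vertex `v` of `conv s` that does not minimize `φ` lies on an edge `[v, u]`
of `conv s` whose other endpoint `u` is a vertex with `φ u < φ v`. -/
theorem exists_edge_lt [DecidableEq E] [SeparatingDual ℝ E] {s : Finset E} {ℓ φ : E →L[ℝ] ℝ}
    {v w : E} (hv : argmaxSet s ℓ = {v}) (hw : w ∈ s) (hφ : φ w < φ v) :
    ∃ u ∈ s, φ u < φ v ∧ (∃ g : E →L[ℝ] ℝ, convexHull ℝ ↑(argmaxSet s g) = segment ℝ v u) ∧
      ∃ g : E →L[ℝ] ℝ, argmaxSet s g = {u} := by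
  have hlt : ∀ q ∈ s.erase v, ℓ q < ℓ v := fun q hq =>
    lt_of_argmaxSet_eq_singleton hv (Finset.mem_of_mem_erase hq) (Finset.ne_of_mem_erase hq)
  have hws : w ∈ s.erase v := Finset.mem_erase.2 ⟨fun h => (h ▸ hφ).false, hw⟩
  -- `e` is a vertex of the vertex figure minimizing `φ`
  obtain ⟨h, e, he_min, he⟩ :=
    exists_argmaxSet_eq_singleton_subset ⟨_, Finset.mem_image_of_mem (radialProj ℓ v) hws⟩ (-φ)
  set T := (s.erase v).filter (radialProj ℓ v · = e)
  set g : E →L[ℝ] ℝ := h + h e • ℓ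
  have hg : argmaxSet s g = insert v T := argmaxSet_add_smul_radialProj hv he
  obtain ⟨u, huT, humin⟩ := T.exists_min_image ℓ <| by
    obtain ⟨p, hp, hpe⟩ := Finset.mem_image.1 (argmaxSet_subset he_min)
    exact ⟨p, Finset.mem_filter.2 ⟨hp, hpe⟩⟩
  obtain ⟨hus, hue⟩ := Finset.mem_filter.1 huT
  have hT : ∀ p ∈ T, ℓ p < ℓ v ∧ radialProj ℓ v p = radialProj ℓ v u := fun p hp =>
    ⟨hlt p (Finset.mem_filter.1 hp).1, (Finset.mem_filter.1 hp).2.trans hue.symm⟩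
  have hφu : φ u < φ v := by
    have hφe : φ e < 0 := by
      have h₁ : φ e ≤ φ (radialProj ℓ v w) := by
        simpa using (mem_argmaxSet.1 he_min).2 _ (Finset.mem_image_of_mem _ hws)
      have h₂ := map_sub_eq_mul_radialProj φ (hlt w hws).ne
      exact h₁.trans_lt (neg_of_mul_neg_right (by linarith) (sub_nonneg.2 (hlt w hws).le))
    have := map_sub_eq_mul_radialProj φ (hlt u hus).ne
    rw [hue] at this
    linarith [mul_neg_of_pos_of_neg (sub_pos.2 (hlt u hus)) hφe]
  obtain ⟨g', hg'⟩ := exists_argmaxSet_eq_argmaxSet_argmaxSet s g (-ℓ)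
  refine ⟨u, Finset.mem_of_mem_erase hus, hφu, ⟨g, ?_⟩, ⟨g', ?_⟩⟩
  · rw [hg, Finset.coe_insert]
    exact convexHull_insert_eq_segment hT huT humin
  · rw [hg', hg]
    exact argmaxSet_insert_neg_eq_singleton hT huT humin

end Edge

section Orientation

variable {V : Type*}

def descendingOrientation (G : SimpleGraph V) (f : V → ℝ) (a b : V) : Prop :=
  G.Adj a b ∧ f b < f a

theorem isOrientation_descendingOrientation (G : SimpleGraph V) {f : V → ℝ}
    (hf : Injective f) : IsOrientation G (descendingOrientation G f) := by
  refine ⟨fun _ _ h => h.1, fun a b hab => ⟨fun h h' => h.2.asymm h'.2, fun h => ⟨hab, ?_⟩⟩⟩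
  exact (hf.ne hab.ne).lt_or_gt.resolve_left fun hlt => h ⟨hab.symm, hlt⟩

theorem acyclicOrientation_descendingOrientation (G : SimpleGraph V) (f : V → ℝ) :
    AcyclicOrientation (descendingOrientation G f) := by
  have hlt : ∀ a b, Relation.TransGen (descendingOrientation G f) a b → f b < f a :=
    fun a b hab => by
      induction hab with
      | single hab => exact hab.2
      | tail _ hbc ih => exact hbc.2.trans ih
  exact fun v hv => lt_irrefl _ (hlt v v hv)

end Orientation

section PolytopeGraph

variable {d : ℕ} {s : Finset (EuclideanSpace ℝ (Fin d))}

local notation "P" => convexHull ℝ (s : Set (EuclideanSpace ℝ (Fin d)))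

theorem Vtx.coe_mem (v : Vtx P) : (v : EuclideanSpace ℝ (Fin d)) ∈ s :=
  mem_of_isExposed_singleton v.2

theorem exists_adj_lt {l φ : EuclideanSpace ℝ (Fin d) →L[ℝ] ℝ} {v : Vtx P}
    (hv : ↑v ∈ l.toExposed P) {w : EuclideanSpace ℝ (Fin d)} (hw : w ∈ argmaxSet s l)
    (hφ : φ w < φ v) :
    ∃ u : Vtx P, (polyGraph P).Adj v u ∧ ↑u ∈ l.toExposed P ∧ φ u < φ v := by
  classical
  obtain ⟨ℓ, hℓ⟩ := isExposed_singleton_iff.1 v.2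
  have hℓA : argmaxSet (argmaxSet s l) ℓ = {↑v} := argmaxSet_eq_singleton_of_subset hℓ
    argmaxSet_subset (mem_argmaxSet_of_mem_toExposed v.coe_mem hv)
  obtain ⟨u, huA, hφu, ⟨g, hg⟩, ⟨g', hg'⟩⟩ := exists_edge_lt hℓA hw hφ
  obtain ⟨g₁, hg₁⟩ := exists_argmaxSet_eq_argmaxSet_argmaxSet s l g
  obtain ⟨g₂, hg₂⟩ := exists_argmaxSet_eq_argmaxSet_argmaxSet s l g'
  refine ⟨⟨u, isExposed_singleton_iff.2 ⟨g₂, hg₂.trans hg'⟩⟩,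
    ⟨fun h => hφu.ne' (congrArg (fun x : Vtx P => φ x) h), ?_⟩,
    argmaxSet_subset_toExposed l huA, hφu⟩
  exact hg ▸ hg₁ ▸ isExposed_convexHull_argmaxSet s g₁

theorem existsUnique_isSinkOn {φ : EuclideanSpace ℝ (Fin d) →L[ℝ] ℝ} (hφ : InjOn φ s)
    {G : Set (EuclideanSpace ℝ (Fin d))} (hG : IsFace P G) (hne : G.Nonempty) :
    ∃! v : Vtx P, IsSinkOn (descendingOrientation (polyGraph P) (φ ·)) (faceVerts P G) v := by
  obtain ⟨l, rfl⟩ := hG hne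
  have hs : s.Nonempty := by
    simpa using (convexHull_nonempty_iff (𝕜 := ℝ)).1 (hne.mono fun _ hx => hx.1)
  have hsink : ∀ v : Vtx P,
      IsSinkOn (descendingOrientation (polyGraph P) (φ ·)) (faceVerts P (l.toExposed P)) v →
        ∀ w ∈ argmaxSet s l, φ v ≤ φ w := by
    rintro v ⟨hvG, hv⟩ w hw
    by_contra! hlt
    obtain ⟨u, hadj, huG, hφu⟩ := exists_adj_lt hvG hw hlt
    exact hv u huG ⟨hadj, hφu⟩
  obtain ⟨h, m, hm, hmh⟩ :=
    exists_argmaxSet_eq_singleton_subset (argmaxSet_nonempty (f := l) hs) (-φ)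
  obtain ⟨g, hg⟩ := exists_argmaxSet_eq_argmaxSet_argmaxSet s l h
  have hmin : ∀ v : Vtx P, ↑v ∈ l.toExposed P → φ m ≤ φ v := fun v hv => by
    simpa using (mem_argmaxSet.1 hm).2 _ (mem_argmaxSet_of_mem_toExposed v.coe_mem hv)
  refine ⟨⟨m, isExposed_singleton_iff.2 ⟨g, hg.trans hmh⟩⟩,
    ⟨argmaxSet_subset_toExposed l (argmaxSet_subset hm), fun u hu hmu => (hmin u hu).not_gt hmu.2⟩,
    fun v hv => Subtype.ext (hφ v.coe_mem (argmaxSet_subset (argmaxSet_subset hm)) ?_)⟩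
  exact (hsink v hv m (argmaxSet_subset hm)).antisymm (hmin v hv.1)

theorem isAOF_descendingOrientation {φ : EuclideanSpace ℝ (Fin d) →L[ℝ] ℝ} (hφ : InjOn φ s) :
    IsAOF P (descendingOrientation (polyGraph P) (φ ·)) :=
  ⟨isOrientation_descendingOrientation _ fun a b h => Subtype.ext (hφ a.coe_mem b.coe_mem h),
    acyclicOrientation_descendingOrientation _ _, fun _ hG hne => existsUnique_isSinkOn hφ hG hne⟩

end PolytopeGraph

/-- For every nonempty face `F` of a simple `d`-polytope there is an
AOF-orientation for which the vertex set of `F` is initial (no edge is directed from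
outside `F` into `F`). -/
theorem stmt_15 {d : ℕ} (P : Set (EuclideanSpace ℝ (Fin d))) (hP : IsSimplePolytope P)
    (F : Set (EuclideanSpace ℝ (Fin d))) (hF : IsFace P F) (hne : F.Nonempty) :
    ∃ O : Vtx P → Vtx P → Prop, IsAOF P O ∧
      ∀ u v : Vtx P, O u v → (v : EuclideanSpace ℝ (Fin d)) ∈ F →
        (u : EuclideanSpace ℝ (Fin d)) ∈ F := by
  obtain ⟨s, rfl⟩ := hP.1
  obtain ⟨l, rfl⟩ := hF hne
  obtain ⟨φ, hφ, hφl⟩ := exists_injOn_forall_lt s l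
  refine ⟨_, isAOF_descendingOrientation hφ, fun u v huv hv => ⟨u.2.subset rfl, fun y hy => ?_⟩⟩
  by_contra! hlt
  exact huv.2.not_gt (hφl u u.coe_mem v v.coe_mem (hlt.trans_le (hv.2 y hy)))
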